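/- arXiv:hep-th/0401053 — 5 statements merged into one kernel-verified Lean document; each statement's English description precedes it below -/
import Mathlib

section
/- If n = (n_1,...,n_{10}) ∈ Z^{10} satisfies Σ n_i ≡ 0 mod 3, all n_i ≠ 0, and at least one n_i > 0 and at least one n_j < 0, and n is not a permutation of (1,-1,0,...,0)-type (i.e. genuinely all entries nonzero), then q(n) = Σ n_i² − (1/9)(Σ n_i)² > 2. -/
/-- The `E₁₀` quadratic form in the physical basis. -/
def qE10 (n : Fin 10 → ℤ) : ℚ :=
  (∑ i, ((n i : ℚ)) ^ 2) - (1 / 9) * (∑ i, (n i : ℚ)) ^ 2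

/-!
Put `S = ∑ nᵢ`, `Q = ∑ nᵢ²` and `d = 10`; we show `9Q - S² > 18`. Let `P` be the sum of the
positive entries and `N` minus the sum of the others, so `S = P - N`, and assume `S ≥ 0`.
There are at most `d - 1` positive entries, so by Cauchy–Schwarz their squares sum to at
least `P² / (d - 1)`, while integer entries satisfy `|nᵢ| ≤ nᵢ²`. Hence
`(d - 1) Q - S² ≥ P² + (d - 1) N - (P - N)² = N (N + 2S + d - 1) ≥ 2S + d` as soon as `N ≥ 1`.
This settles `|S| ≥ 5`; for `|S| ≤ 4` it suffices that `Q ≥ d` when no entry vanishes.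
-/

section

variable {ι : Type*} [Fintype ι]

theorem two_mul_sum_add_card_le_of_exists_neg (n : ι → ℤ) (hneg : ∃ j, n j < 0)
    (hS : 0 ≤ ∑ i, n i) :
    2 * ∑ i, n i + Fintype.card ι ≤
      (Fintype.card ι - 1) * ∑ i, n i ^ 2 - (∑ i, n i) ^ 2 := by
  classical
  obtain ⟨j, hj⟩ := hneg
  set s := Finset.univ.filter (fun i => 0 < n i)
  set t := Finset.univ.filter (fun i => ¬ 0 < n i)
  set c : ℤ := Fintype.card ι - 1
  set P := ∑ i ∈ s, n i
  set N := ∑ i ∈ t, -n i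
  have hsum : ∑ i, n i = P - N := by
    simp only [P, N, s, t, Finset.sum_neg_distrib, sub_neg_eq_add,
      Finset.sum_filter_add_sum_filter_not]
  have hsum_sq : ∑ i, n i ^ 2 = ∑ i ∈ s, n i ^ 2 + ∑ i ∈ t, n i ^ 2 :=
    (Finset.sum_filter_add_sum_filter_not _ _ _).symm
  have hjt : j ∈ t := by simp [t, hj.le]
  have hc : (s.card : ℤ) ≤ c := by
    have : s.card < Fintype.card ι :=
      Finset.card_lt_univ_of_notMem (x := j) (by simp [s, hj.le])
    omega
  have hP : P ^ 2 ≤ c * ∑ i ∈ s, n i ^ 2 :=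
    sq_sum_le_card_mul_sum_sq.trans
      (mul_le_mul_of_nonneg_right hc (Finset.sum_nonneg fun i _ => sq_nonneg _))
  have hN : N ≤ ∑ i ∈ t, n i ^ 2 :=
    Finset.sum_le_sum fun i _ => by simpa using Int.le_self_sq (-n i)
  have hN_pos : 1 ≤ N := by
    have : -n j ≤ N :=
      Finset.single_le_sum (f := fun i => -n i) (fun i hi => by simp [t] at hi; omega) hjt
    omega
  have hc_nonneg : 0 ≤ c := le_trans (Nat.cast_nonneg _) hc
  rw [hsum_sq, hsum]
  rw [hsum] at hS
  nlinarith [mul_le_mul_of_nonneg_left hN hc_nonneg,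
    mul_nonneg (sub_nonneg.mpr hN_pos) (by linarith : 0 ≤ N + 2 * (P - N) + c)]

theorem two_mul_abs_sum_add_card_le (n : ι → ℤ) (hpos : ∃ i, 0 < n i) (hneg : ∃ j, n j < 0) :
    2 * |∑ i, n i| + Fintype.card ι ≤
      (Fintype.card ι - 1) * ∑ i, n i ^ 2 - (∑ i, n i) ^ 2 := by
  rcases le_total 0 (∑ i, n i) with hS | hS
  · rw [abs_of_nonneg hS]
    exact two_mul_sum_add_card_le_of_exists_neg n hneg hS
  · have hpos' : ∃ j, (-n) j < 0 := hpos.imp fun i hi => by simpa using hi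
    have := two_mul_sum_add_card_le_of_exists_neg (-n) hpos' (by simpa using hS)
    simp only [Pi.neg_apply, Finset.sum_neg_distrib, neg_sq] at this
    rwa [abs_of_nonpos hS]

theorem card_le_sum_sq_of_ne_zero (n : ι → ℤ) (hne : ∀ i, n i ≠ 0) :
    (Fintype.card ι : ℤ) ≤ ∑ i, n i ^ 2 := by
  simpa using Finset.card_nsmul_le_sum Finset.univ (fun i => n i ^ 2) 1
    fun i _ => (one_le_sq_iff_one_le_abs _).mpr (Int.one_le_abs (hne i))

end

theorem qE10_eq_div (n : Fin 10 → ℤ) :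
    qE10 n = ((9 * ∑ i, n i ^ 2 - (∑ i, n i) ^ 2 : ℤ) : ℚ) / 9 := by
  unfold qE10
  push_cast
  ring

theorem qE10_gt_two_of_mixed_signs_general (n : Fin 10 → ℤ)
    (hne : ∀ i, n i ≠ 0)
    (hpos : ∃ i, 0 < n i)
    (hneg : ∃ j, n j < 0) :
    qE10 n > 2 := by
  have hmixed := two_mul_abs_sum_add_card_le n hpos hneg
  have hsq := card_le_sum_sq_of_ne_zero n hne
  simp only [Fintype.card_fin, Nat.cast_ofNat] at hmixed hsq
  have key : 18 < 9 * ∑ i, n i ^ 2 - (∑ i, n i) ^ 2 := by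
    rcases le_or_gt 5 |∑ i, n i| with hS | hS
    · linarith
    · nlinarith [sq_abs (∑ i, n i), abs_nonneg (∑ i, n i)]
  rw [qE10_eq_div, gt_iff_lt, lt_div_iff₀ (by norm_num)]
  exact_mod_cast key

/-- If `n ∈ ℤ¹⁰` satisfies `Σ nᵢ ≡ 0 mod 3`, all `nᵢ ≠ 0`, and has at least one
positive and at least one negative entry, then `q(n) > 2`. -/
theorem qE10_gt_two_of_mixed_signs (n : Fin 10 → ℤ)
    (hdvd : (3 : ℤ) ∣ ∑ i, n i)
    (hne : ∀ i, n i ≠ 0)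
    (hpos : ∃ i, 0 < n i)
    (hneg : ∃ j, n j < 0) :
    qE10 n > 2 :=
  qE10_gt_two_of_mixed_signs_general n hne hpos hneg
end

section
/- Suppose n ∈ Z^{10} has entries n_1 = ... = n_s = 1 for some s ≥ 2 and 2 ≤ n_{s+1} ≤ ... ≤ n_{10}, with Σ n_i ≡ 0 mod 3. If q(n) = Σ n_i² − (1/9)(Σ n_i)² ≤ 0, then, up to permutation of coordinates, n is one of: (1,1,1,1,1,1,1,1,2,2), (1,1,1,1,1,2,2,2,2,2), (1,1,1,2,2,2,2,2,2,3), (1,1,2,2,2,2,2,3,3,3), (1,1,2,2,3,3,3,3,3,3), (1,1,3,3,3,3,3,3,3,4), (1,1,2,2,2,2,2,2,2,2). -/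
lemma sum_ten (f : Fin 10 → ℤ) :
    ∑ i, f i = f 0 + f 1 + f 2 + f 3 + f 4 + f 5 + f 6 + f 7 + f 8 + f 9 := by
  rw [Fin.sum_univ_castSucc, Fin.sum_univ_castSucc, Fin.sum_univ_eight]
  rfl

lemma vec_ext10 (n v : Fin 10 → ℤ) (h0 : n 0 = v 0) (h1 : n 1 = v 1)
    (h2 : n 2 = v 2) (h3 : n 3 = v 3) (h4 : n 4 = v 4) (h5 : n 5 = v 5)
    (h6 : n 6 = v 6) (h7 : n 7 = v 7) (h8 : n 8 = v 8) (h9 : n 9 = v 9) : n = v := by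
  funext i; fin_cases i <;> assumption

set_option maxHeartbeats 4000000 in
/-- Classification of imaginary roots (`q ≤ 0`) with singleton count `s ≥ 2`:
if `n₁ = ⋯ = n_s = 1` with `s ≥ 2` and `2 ≤ n_{s+1} ≤ ⋯ ≤ n₁₀`, with
`Σ nᵢ ≡ 0 mod 3` and `q(n) ≤ 0`, then `n` is a permutation of one of the seven
listed vectors. -/
theorem imaginary_roots_singleton_ge_two (n : Fin 10 → ℤ) (s : ℕ)
    (hs : 2 ≤ s) (hs10 : s ≤ 10)
    (hone : ∀ i : Fin 10, i.val < s → n i = 1)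
    (htwo : ∀ i : Fin 10, s ≤ i.val → 2 ≤ n i)
    (hmono : ∀ i j : Fin 10, s ≤ i.val → i ≤ j → n i ≤ n j)
    (hdvd : (3 : ℤ) ∣ ∑ i, n i)
    (hq : qE10 n ≤ 0) :
    ∃ σ : Equiv.Perm (Fin 10),
      (n ∘ σ) ∈ ({![1,1,1,1,1,1,1,1,2,2],
                   ![1,1,1,1,1,2,2,2,2,2],
                   ![1,1,1,2,2,2,2,2,2,3],
                   ![1,1,2,2,2,2,2,3,3,3],
                   ![1,1,2,2,3,3,3,3,3,3],
                   ![1,1,3,3,3,3,3,3,3,4],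
                   ![1,1,2,2,2,2,2,2,2,2]} : Set (Fin 10 → ℤ)) := by
  have hge : ∀ i : Fin 10, 1 ≤ n i := by
    intro i
    rcases lt_or_ge i.val s with h | h
    · exact (hone i h).ge
    · linarith [htwo i h]
  have step : ∀ i j : Fin 10, i ≤ j → n i ≤ n j := by
    intro i j hij
    rcases lt_or_ge i.val s with h | h
    · rw [hone i h]; exact hge j
    · exact hmono i j h hij
  have h0 : n 0 = 1 := hone 0 (by simp; omega)
  have h1 : n 1 = 1 := hone 1 (by simp; omega)
  have hq' : 9 * (∑ i, (n i)^2) ≤ (∑ i, n i)^2 := by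
    have h : (9:ℚ) * (∑ i, ((n i:ℚ))^2) ≤ (∑ i, (n i:ℚ))^2 := by
      unfold qE10 at hq; linarith
    exact_mod_cast h
  simp only [sum_ten] at hq' hdvd
  obtain ⟨a2, a3, a4, a5, a6, a7, a8, a9, e2, e3, e4, e5, e6, e7, e8, e9⟩ :
      ∃ a2 a3 a4 a5 a6 a7 a8 a9 : ℤ, n 2 = a2 ∧ n 3 = a3 ∧ n 4 = a4 ∧ n 5 = a5 ∧
        n 6 = a6 ∧ n 7 = a7 ∧ n 8 = a8 ∧ n 9 = a9 :=
    ⟨_, _, _, _, _, _, _, _, rfl, rfl, rfl, rfl, rfl, rfl, rfl, rfl⟩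
  rw [h0, h1, e2, e3, e4, e5, e6, e7, e8, e9] at hq' hdvd
  have hb2 : 1 ≤ a2 := by rw [← e2]; exact hge 2
  have hc23 : a2 ≤ a3 := by rw [← e2, ← e3]; exact step 2 3 (by decide)
  have hc34 : a3 ≤ a4 := by rw [← e3, ← e4]; exact step 3 4 (by decide)
  have hc45 : a4 ≤ a5 := by rw [← e4, ← e5]; exact step 4 5 (by decide)
  have hc56 : a5 ≤ a6 := by rw [← e5, ← e6]; exact step 5 6 (by decide)
  have hc67 : a6 ≤ a7 := by rw [← e6, ← e7]; exact step 6 7 (by decide)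
  have hc78 : a7 ≤ a8 := by rw [← e7, ← e8]; exact step 7 8 (by decide)
  have hc89 : a8 ≤ a9 := by rw [← e8, ← e9]; exact step 8 9 (by decide)
  have h9le : a9 ≤ 4 := by
    have hCS : (a2 + a3 + a4 + a5 + a6 + a7 + a8)^2
        ≤ 7 * (a2^2 + a3^2 + a4^2 + a5^2 + a6^2 + a7^2 + a8^2) := by
      have h := sq_sum_le_card_mul_sum_sq (s := (Finset.univ : Finset (Fin 7)))
        (f := ![a2, a3, a4, a5, a6, a7, a8])
      simpa [Fin.sum_univ_seven] using h
    nlinarith [hCS, hq', sq_nonneg (2*(a2+a3+a4+a5+a6+a7+a8) - 7*a9 - 14), hb2, hc89]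
  have hu2 : a2 ≤ 4 := by omega
  have hu3 : a3 ≤ 4 := by omega
  have hu4 : a4 ≤ 4 := by omega
  have hu5 : a5 ≤ 4 := by omega
  have hu6 : a6 ≤ 4 := by omega
  have hu7 : a7 ≤ 4 := by omega
  have hu8 : a8 ≤ 4 := by omega
  clear hq hone htwo hmono step hge
  interval_cases a2 <;> interval_cases a3 <;> interval_cases a4 <;> interval_cases a5 <;>
    interval_cases a6 <;> interval_cases a7 <;> interval_cases a8 <;> interval_cases a9 <;>
    first
    | (exfalso; revert hq' hdvd; norm_num; done)
    | (refine ⟨1, ?_⟩;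
       simp only [Equiv.Perm.coe_one, Function.comp_id, Set.mem_insert_iff,
         Set.mem_singleton_iff];
       first
       | exact Or.inl (vec_ext10 n _ h0 h1 e2 e3 e4 e5 e6 e7 e8 e9)
       | exact Or.inr (Or.inl (vec_ext10 n _ h0 h1 e2 e3 e4 e5 e6 e7 e8 e9))
       | exact Or.inr (Or.inr (Or.inl (vec_ext10 n _ h0 h1 e2 e3 e4 e5 e6 e7 e8 e9)))
       | exact Or.inr (Or.inr (Or.inr (Or.inl (vec_ext10 n _ h0 h1 e2 e3 e4 e5 e6 e7 e8 e9))))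
       | exact Or.inr (Or.inr (Or.inr (Or.inr (Or.inl (vec_ext10 n _ h0 h1 e2 e3 e4 e5 e6 e7 e8 e9)))))
       | exact Or.inr (Or.inr (Or.inr (Or.inr (Or.inr (Or.inl (vec_ext10 n _ h0 h1 e2 e3 e4 e5 e6 e7 e8 e9))))))
       | exact Or.inr (Or.inr (Or.inr (Or.inr (Or.inr (Or.inr (vec_ext10 n _ h0 h1 e2 e3 e4 e5 e6 e7 e8 e9)))))))
end

section
/- For s ≥ 2 and integers 2 ≤ n_{s+1} ≤ ... ≤ n_{10}, the E10 norm of the vector n = (1,...,1,n_{s+1},...,n_{10}) (with s leading 1's) satisfies q(n) = (1/9)Σ_{s+1≤i<j≤10}(n_i−n_j)² + ((s−1)/9)Σ_{i=s+1}^{10}(n_i − s/(s−1))² − s/(s−1). -/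
/-!
Off `T = {i | s ≤ i}` all coordinates equal `1`, so `∑ nᵢ²` and `∑ nᵢ` are `s` plus the
corresponding sums over `T`. Lagrange's identity turns the pair sum over `T` into
`#T ∑_T nᵢ² - (∑_T nᵢ)²`, and expanding the squares around `c = s/(s-1)` makes both sides the
same polynomial in `∑_T nᵢ²` and `∑_T nᵢ`; the constant terms agree because
`10s - s² - 9 = (s-1)(9-s)`.
-/

open Finset

namespace Finset

theorem sum_sum_eq_two_nsmul_sum_filter_lt {ι M : Type*} [LinearOrder ι] [AddCommMonoid M]
    (s : Finset ι) (g : ι → ι → M) (hsymm : ∀ i j, g i j = g j i)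
    (hdiag : ∀ i, g i i = 0) :
    ∑ i ∈ s, ∑ j ∈ s, g i j = 2 • ∑ x ∈ s ×ˢ s with x.1 < x.2, g x.1 x.2 := by
  have hgt :
      ∑ x ∈ s ×ˢ s with x.2 < x.1, g x.1 x.2 = ∑ x ∈ s ×ˢ s with x.1 < x.2, g x.1 x.2 :=
    sum_equiv (Equiv.prodComm ι ι) (by simp [and_comm]) (fun x _ => hsymm _ _)
  have hle :
      ∑ x ∈ s ×ˢ s with ¬x.1 < x.2, g x.1 x.2 = ∑ x ∈ s ×ˢ s with x.2 < x.1, g x.1 x.2 := by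
    rw [← sum_filter_add_sum_filter_not _ (fun x : ι × ι => x.2 < x.1), filter_filter,
      sum_eq_zero (s := filter _ (filter _ _)), add_zero]
    · exact sum_congr (filter_congr fun x _ => ⟨fun h => h.2, fun h => ⟨h.not_gt, h⟩⟩)
        fun _ _ => rfl
    · intro x hx
      simp only [mem_filter, not_lt] at hx
      rw [le_antisymm hx.2 hx.1.2, hdiag]
  rw [← sum_product', ← sum_filter_add_sum_filter_not _ (fun x : ι × ι => x.1 < x.2), hle, hgt,
    two_nsmul]

theorem sum_sum_sub_sq {ι R : Type*} [CommRing R] (s : Finset ι) (f : ι → R) :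
    ∑ i ∈ s, ∑ j ∈ s, (f i - f j) ^ 2 = 2 * (#s * ∑ i ∈ s, f i ^ 2 - (∑ i ∈ s, f i) ^ 2) := by
  simp only [_root_.sub_sq, sum_add_distrib, sum_sub_distrib, sum_const, ← mul_sum, ← sum_mul,
    nsmul_eq_mul]
  ring

theorem sum_product_filter_lt_sub_sq {ι R : Type*} [LinearOrder ι] [CommRing R]
    [IsAddTorsionFree R] (s : Finset ι) (f : ι → R) :
    ∑ x ∈ s ×ˢ s with x.1 < x.2, (f x.1 - f x.2) ^ 2 =
      #s * ∑ i ∈ s, f i ^ 2 - (∑ i ∈ s, f i) ^ 2 := by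
  refine nsmul_right_injective two_ne_zero ?_
  dsimp only
  rw [← sum_sum_eq_two_nsmul_sum_filter_lt s (fun i j => (f i - f j) ^ 2)
    (fun i j => by ring) (fun i => by ring), sum_sum_sub_sq, two_nsmul, two_mul]

theorem sum_sub_const_sq {ι R : Type*} [CommRing R] (s : Finset ι) (f : ι → R) (c : R) :
    ∑ i ∈ s, (f i - c) ^ 2 = ∑ i ∈ s, f i ^ 2 - 2 * c * ∑ i ∈ s, f i + #s * c ^ 2 := by
  simp only [_root_.sub_sq, sum_add_distrib, sum_sub_distrib, sum_const, ← mul_sum, ← sum_mul,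
    nsmul_eq_mul]
  ring

theorem sum_eq_card_compl_add_of_eq_one {ι R : Type*} [Fintype ι] [DecidableEq ι]
    [AddCommMonoidWithOne R] (t : Finset ι) (f : ι → R) (hf : ∀ i ∉ t, f i = 1) :
    ∑ i, f i = #tᶜ + ∑ i ∈ t, f i := by
  rw [← sum_compl_add_sum t, sum_congr rfl (fun i hi => hf i (mem_compl.mp hi)), sum_const,
    nsmul_one]

end Finset

theorem qE10_singleton_identity_general (s : ℕ) (hs : 2 ≤ s) (hs10 : s ≤ 10)
    (n : Fin 10 → ℤ)
    (hone : ∀ i : Fin 10, i.val < s → n i = 1) :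
    qE10 n =
      (1 / 9) * (∑ p ∈ Finset.univ.filter
          (fun p : Fin 10 × Fin 10 => s ≤ p.1.val ∧ p.1 < p.2),
          ((n p.1 : ℚ) - (n p.2 : ℚ)) ^ 2)
      + (((s : ℚ) - 1) / 9) * (∑ i ∈ Finset.univ.filter (fun i : Fin 10 => s ≤ i.val),
          ((n i : ℚ) - (s : ℚ) / ((s : ℚ) - 1)) ^ 2)
      - (s : ℚ) / ((s : ℚ) - 1) := by
  set T : Finset (Fin 10) := {i | s ≤ i.val}
  have hcompl : #Tᶜ = s := by
    simpa [T, compl_filter, hs10] using Fin.card_filter_val_lt (n := 10) (m := s)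
  have hcard : (#T : ℚ) = 10 - s := by
    have : #T = 10 - s := by rw [← compl_compl T, card_compl, hcompl, Fintype.card_fin]
    rw [this, Nat.cast_sub hs10, Nat.cast_ofNat]
  have hones : ∀ i ∉ T, (n i : ℚ) = 1 := fun i hi => by
    simp [hone i (by simpa [T] using hi)]
  have hpairs : ({p : Fin 10 × Fin 10 | s ≤ p.1.val ∧ p.1 < p.2} : Finset _) =
      {p ∈ T ×ˢ T | p.1 < p.2} := by
    ext ⟨i, j⟩
    simp only [T, mem_filter, mem_univ, true_and, mem_product]
    exact ⟨fun ⟨hi, hij⟩ => ⟨⟨hi, hi.trans hij.le⟩, hij⟩, fun ⟨⟨hi, _⟩, hij⟩ => ⟨hi, hij⟩⟩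
  have hs1 : (s : ℚ) - 1 ≠ 0 := by
    have : (2 : ℚ) ≤ s := by exact_mod_cast hs
    linarith
  rw [qE10, sum_eq_card_compl_add_of_eq_one T _ hones,
    sum_eq_card_compl_add_of_eq_one T (fun i => (n i : ℚ) ^ 2) (fun i hi => by simp [hones i hi]),
    hpairs, sum_product_filter_lt_sub_sq T (fun i => (n i : ℚ)), sum_sub_const_sq, hcard, hcompl]
  field_simp
  ring

/-- For `s ≥ 2` and `2 ≤ n_{s+1} ≤ ⋯ ≤ n₁₀`, with `n₁ = ⋯ = n_s = 1`, one has
`q(n) = (1/9) Σ_{s+1≤i<j≤10}(nᵢ−nⱼ)² + ((s−1)/9) Σ_{i>s}(nᵢ − s/(s−1))² − s/(s−1)`. -/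
theorem qE10_singleton_identity (s : ℕ) (hs : 2 ≤ s) (hs10 : s ≤ 10)
    (n : Fin 10 → ℤ)
    (hone : ∀ i : Fin 10, i.val < s → n i = 1)
    (htwo : ∀ i : Fin 10, s ≤ i.val → 2 ≤ n i)
    (hmono : ∀ i j : Fin 10, s ≤ i.val → i ≤ j → n i ≤ n j) :
    qE10 n =
      (1 / 9) * (∑ p ∈ Finset.univ.filter
          (fun p : Fin 10 × Fin 10 => s ≤ p.1.val ∧ p.1 < p.2),
          ((n p.1 : ℚ) - (n p.2 : ℚ)) ^ 2)
      + (((s : ℚ) - 1) / 9) * (∑ i ∈ Finset.univ.filter (fun i : Fin 10 => s ≤ i.val),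
          ((n i : ℚ) - (s : ℚ) / ((s : ℚ) - 1)) ^ 2)
      - (s : ℚ) / ((s : ℚ) - 1) :=
  qE10_singleton_identity_general s hs hs10 n hone
end

section
/- There are infinitely many vectors n ∈ Z^{10} with Σ n_i ≡ 0 mod 3, q(n) ≤ 0, all entries positive, and singleton count exactly 1 (i.e., exactly one entry equal to 1). -/
/-! Adding `m` to every coordinate except the `k`-th raises `Σ nᵢ` by `9m`, which keeps it divisible
by `3`, and changes `q` by exactly `-2m·n_k` (the `9m²` terms cancel). Starting from the null root
`(1, 2, 2, 2, 2, 2, 2, 2, 2, 4)` (`q = 49 - 21²/9 = 0`) and shifting all coordinates but the one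
equal to `1` gives infinitely many admissible vectors. -/

open Finset

def shiftExcept (k : Fin 10) (m : ℤ) : Fin 10 → ℤ := fun i => if i = k then 0 else m

theorem sum_comp_add_shiftExcept {M : Type*} [AddCommMonoid M] (f : ℤ → M) (n : Fin 10 → ℤ)
    (k : Fin 10) (m : ℤ) :
    ∑ i, f ((n + shiftExcept k m) i) = f (n k) + ∑ i ∈ {k}ᶜ, f (n i + m) := by
  rw [Fintype.sum_eq_add_sum_compl k]
  congr 1
  · simp [shiftExcept]
  · exact sum_congr rfl fun i hi => by simp_all [shiftExcept]

theorem sum_add_shiftExcept (n : Fin 10 → ℤ) (k : Fin 10) (m : ℤ) :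
    ∑ i, (n + shiftExcept k m) i = ∑ i, n i + 9 * m := by
  simp [shiftExcept, sum_add_distrib, sum_ite, filter_ne']

theorem qE10_add_shiftExcept (n : Fin 10 → ℤ) (k : Fin 10) (m : ℤ) :
    qE10 (n + shiftExcept k m) = qE10 n - 2 * m * n k := by
  have hsq := sum_comp_add_shiftExcept (fun a : ℤ => (a : ℚ) ^ 2) n k m
  have hsum := sum_comp_add_shiftExcept (fun a : ℤ => (a : ℚ)) n k m
  simp only [qE10, hsq, hsum, Fintype.sum_eq_add_sum_compl k (fun i => (n i : ℚ) ^ 2),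
    Fintype.sum_eq_add_sum_compl k (fun i => (n i : ℚ)), Int.cast_add, add_sq, sum_add_distrib,
    ← sum_mul, ← mul_sum, sum_const, card_compl, Fintype.card_fin, card_singleton, nsmul_eq_mul]
  push_cast
  ring

theorem card_filter_eq_one_iff {n : Fin 10 → ℤ} {k : Fin 10} (hk : n k = 1) :
    #(univ.filter fun i => n i = 1) = 1 ↔ ∀ i ≠ k, n i ≠ 1 := by
  rw [card_eq_one]
  constructor
  · rintro ⟨a, ha⟩ i hik hi
    have hmem : ∀ j, n j = 1 → j = a := fun j hj => mem_singleton.1 (ha ▸ by simpa using hj)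
    exact hik ((hmem i hi).trans (hmem k hk).symm)
  · intro h
    exact ⟨k, eq_singleton_iff_unique_mem.2 ⟨by simpa using hk,
      fun i hi => by_contra fun hik => h i hik (by simpa using hi)⟩⟩

def IsSingletonImaginaryRoot (n : Fin 10 → ℤ) : Prop :=
  (3 : ℤ) ∣ ∑ i, n i ∧ qE10 n ≤ 0 ∧ (∀ i, 0 < n i) ∧ #(univ.filter fun i => n i = 1) = 1

theorem IsSingletonImaginaryRoot.add_shiftExcept {n : Fin 10 → ℤ} {k : Fin 10} {m : ℤ}
    (hn : IsSingletonImaginaryRoot n) (hk : n k = 1) (hm : 0 ≤ m) :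
    IsSingletonImaginaryRoot (n + shiftExcept k m) := by
  obtain ⟨hdvd, hq, hpos, hone⟩ := hn
  have hshift : ∀ i ≠ k, (n + shiftExcept k m) i = n i + m := fun i hi => by simp [shiftExcept, hi]
  refine ⟨?_, ?_, fun i => ?_, ?_⟩
  · rw [sum_add_shiftExcept]
    exact dvd_add hdvd (dvd_mul_of_dvd_left (by norm_num) m)
  · rw [qE10_add_shiftExcept, hk, Int.cast_one]
    have : (0 : ℚ) ≤ m := by exact_mod_cast hm
    linarith
  · by_cases hi : i = k
    · simp [shiftExcept, hi, hpos k]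
    · rw [hshift i hi]
      linarith [hpos i]
  · have hk' : (n + shiftExcept k m) k = 1 := by simp [shiftExcept, hk]
    rw [card_filter_eq_one_iff hk']
    intro i hi
    have hne := (card_filter_eq_one_iff hk).1 hone i hi
    have hposi := hpos i
    rw [hshift i hi]
    omega

theorem isSingletonImaginaryRoot_null : IsSingletonImaginaryRoot ![1, 2, 2, 2, 2, 2, 2, 2, 2, 4] := by
  refine ⟨by decide, ?_, by decide, by decide⟩
  norm_num [qE10, Fin.sum_univ_succ]

/-- There are infinitely many vectors `n ∈ ℤ¹⁰` with `Σ nᵢ ≡ 0 mod 3`,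
`q(n) ≤ 0`, all entries positive, and exactly one entry equal to `1`. -/
theorem infinitely_many_imaginary_roots_singleton_one :
    {n : Fin 10 → ℤ |
      (3 : ℤ) ∣ (∑ i, n i) ∧ qE10 n ≤ 0 ∧ (∀ i, 0 < n i) ∧
      (Finset.univ.filter (fun i => n i = 1)).card = 1}.Infinite := by
  refine Set.infinite_of_injective_forall_mem
    (f := fun m : ℕ => ![1, 2, 2, 2, 2, 2, 2, 2, 2, 4] + shiftExcept 0 m) ?_
    fun m => isSingletonImaginaryRoot_null.add_shiftExcept rfl m.cast_nonneg
  intro a b hab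
  simpa [shiftExcept] using congrFun hab 1
end

section
/- The ten simple roots α_{-1},...,α_8 of E10 in the physical basis span (over Z) exactly the lattice {n ∈ Z^{10} : Σ_{i=1}^{10} n_i ≡ 0 mod 3}. -/
/-! Every simple root has coordinate sum `0` or `3`, which gives one inclusion. Conversely, the
roots `e_k - e_{k+1}` chain together to give every difference `e_i - e_j`, so modulo the span a
vector `n` is congruent to `(Σ nᵢ) • e₁₀`; and `3 • e₁₀` is the root `e₈ + e₉ + e₁₀` minus the
differences `e₈ - e₁₀` and `e₉ - e₁₀`. (In the code `e_j` is `Pi.single (j - 1) 1`.) -/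

/-- The standard basis vector `e_j` of `ℤ¹⁰` (0-indexed). -/
def stdVec (j : Fin 10) : Fin 10 → ℤ := fun i => if i = j then 1 else 0

/-- The simple roots `α₋₁, α₀, …, α₈` of `E₁₀` in the physical basis, indexed
by `Fin 10`. -/
def simpleRootE10 (k : Fin 10) : Fin 10 → ℤ :=
  if h : k.val ≤ 8 then
    stdVec ⟨k.val, by omega⟩ - stdVec ⟨k.val + 1, by omega⟩
  else stdVec 7 + stdVec 8 + stdVec 9

def coordSumDvdSubmodule (ι : Type*) {R : Type*} [CommRing R] [Fintype ι] (d : R) :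
    Submodule R (ι → R) where
  carrier := {n | d ∣ ∑ i, n i}
  add_mem' ha hb := by
    simpa only [Set.mem_ofPred_eq, Pi.add_apply, Finset.sum_add_distrib] using dvd_add ha hb
  zero_mem' := by simp
  smul_mem' c n hn := by
    simpa only [Set.mem_ofPred_eq, Pi.smul_apply, smul_eq_mul, ← Finset.mul_sum]
      using dvd_mul_of_dvd_right hn c

theorem AddSubgroup.sub_mem_of_forall_sub_succ_mem {G : Type*} [AddGroup G] {S : AddSubgroup G}
    {m : ℕ} {v : Fin (m + 1) → G} (h : ∀ k : Fin m, v k.castSucc - v k.succ ∈ S) (i j : Fin (m + 1)) :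
    v i - v j ∈ S := by
  have from_zero : ∀ i, v 0 - v i ∈ S := by
    refine Fin.induction (by simp) fun k hk => ?_
    simpa only [sub_add_sub_cancel] using S.add_mem hk (h k)
  simpa only [neg_sub, sub_add_sub_cancel] using S.add_mem (S.neg_mem (from_zero i)) (from_zero j)

theorem sub_sum_smul_single_mem {ι R : Type*} [Fintype ι] [DecidableEq ι] [Ring R]
    {L : Submodule R (ι → R)} (h : ∀ i j, Pi.single i 1 - Pi.single j 1 ∈ L)
    (n : ι → R) (j : ι) : n - (∑ i, n i) • Pi.single j 1 ∈ L := by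
  have hn : n - (∑ i, n i) • Pi.single j 1 = ∑ i, n i • (Pi.single i 1 - Pi.single j 1) := by
    simp only [smul_sub, Finset.sum_sub_distrib, Finset.sum_smul]
    congr 1
    ext k
    simp [Finset.sum_apply, Pi.single_apply]
  rw [hn]
  exact L.sum_mem fun i _ => L.smul_mem _ (h i j)

theorem stdVec_eq_single (j : Fin 10) : stdVec j = Pi.single j 1 := by
  funext i
  simp [stdVec, Pi.single_apply]

theorem simpleRootE10_castSucc (k : Fin 9) :
    simpleRootE10 k.castSucc = Pi.single k.castSucc 1 - Pi.single k.succ 1 := by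
  simp only [simpleRootE10, Fin.val_castSucc, stdVec_eq_single, dif_pos (Nat.le_of_lt_succ k.isLt)]
  rfl

theorem simpleRootE10_nine :
    simpleRootE10 9 = Pi.single 7 1 + Pi.single 8 1 + Pi.single 9 1 := by
  simp [simpleRootE10, stdVec_eq_single]

theorem three_dvd_sum_simpleRootE10 (k : Fin 10) : (3 : ℤ) ∣ ∑ i, simpleRootE10 k i := by
  induction k using Fin.lastCases with
  | last => simp [simpleRootE10_nine, Finset.sum_add_distrib]
  | cast k => simp [simpleRootE10_castSucc]

theorem single_sub_single_mem_span_simpleRootE10 (i j : Fin 10) :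
    (Pi.single i 1 - Pi.single j 1 : Fin 10 → ℤ) ∈ Submodule.span ℤ (Set.range simpleRootE10) :=
  AddSubgroup.sub_mem_of_forall_sub_succ_mem
    (S := (Submodule.span ℤ (Set.range simpleRootE10)).toAddSubgroup) (v := fun i => Pi.single i 1)
    (fun k => simpleRootE10_castSucc k ▸ Submodule.subset_span ⟨k.castSucc, rfl⟩) i j

theorem three_smul_single_mem_span_simpleRootE10 :
    (3 : ℤ) • (Pi.single 9 1 : Fin 10 → ℤ) ∈ Submodule.span ℤ (Set.range simpleRootE10) := by
  have h : (3 : ℤ) • (Pi.single 9 1 : Fin 10 → ℤ) = simpleRootE10 9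
      - (Pi.single 7 1 - Pi.single 9 1) - (Pi.single 8 1 - Pi.single 9 1) := by
    rw [simpleRootE10_nine]; module
  rw [h]
  exact Submodule.sub_mem _ (Submodule.sub_mem _ (Submodule.subset_span ⟨9, rfl⟩)
    (single_sub_single_mem_span_simpleRootE10 7 9)) (single_sub_single_mem_span_simpleRootE10 8 9)

/-- The ten simple roots of `E₁₀` span over `ℤ` exactly the lattice
`{n ∈ ℤ¹⁰ : 3 ∣ Σ nᵢ}`. -/
theorem span_simpleRootsE10 (n : Fin 10 → ℤ) :
    n ∈ Submodule.span ℤ (Set.range simpleRootE10) ↔ (3 : ℤ) ∣ ∑ i, n i := by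
  refine ⟨fun hn => ?_, ?_⟩
  · exact Submodule.span_le (p := coordSumDvdSubmodule (Fin 10) 3).2
      (Set.range_subset_iff.2 three_dvd_sum_simpleRootE10) hn
  · rintro ⟨m, hm⟩
    have hdiff := sub_sum_smul_single_mem single_sub_single_mem_span_simpleRootE10 n 9
    rw [hm, mul_comm, mul_smul] at hdiff
    simpa using Submodule.add_mem _ hdiff
      (Submodule.smul_mem _ m three_smul_single_mem_span_simpleRootE10)
end
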